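/- Let σ > 0. The function w(y,τ) = (4y/σ²)·exp(−1/(2yτ)), defined for y > 0 and τ > 0, is a classical solution of the degenerate parabolic equation w_τ = 2y³·w_yy at every point (y,τ) with y > 0 and τ > 0. -/

import Mathlib

open Real

/-- The function `w(y,τ) = (4y/σ²)·exp(−1/(2yτ))`. -/
noncomputable def wHLW (σ : ℝ) (y τ : ℝ) : ℝ :=
  4 * y / σ ^ 2 * Real.exp (-(1 / (2 * y * τ)))

lemma inner_hasDerivAt (τ : ℝ) (hτ : τ ≠ 0) (z : ℝ) (hz : z ≠ 0) :
    HasDerivAt (fun y' : ℝ => -(1 / (2 * y' * τ))) (1 / (2 * z ^ 2 * τ)) z := by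
  have h : HasDerivAt (fun y' : ℝ => -(2 * τ)⁻¹ * y'⁻¹)
      (-(2 * τ)⁻¹ * -(z ^ 2)⁻¹) z := (hasDerivAt_inv hz).const_mul _
  have hfun : (fun y' : ℝ => -(2 * τ)⁻¹ * y'⁻¹) = fun y' : ℝ => -(1 / (2 * y' * τ)) := by
    funext y'
    simp [mul_inv, div_eq_mul_inv]
    ring
  rw [hfun] at h
  convert h using 1
  field_simp

lemma first_deriv (σ : ℝ) (τ : ℝ) (hτ : τ ≠ 0) (z : ℝ) (hz : 0 < z) :
    HasDerivAt (fun y' => wHLW σ y' τ)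
      (4 / σ ^ 2 * Real.exp (-(1 / (2 * z * τ))) * (1 + 1 / (2 * z * τ))) z := by
  have h1 := inner_hasDerivAt τ hτ z hz.ne'
  have hexp := h1.exp
  have hlin : HasDerivAt (fun y' : ℝ => 4 * y' / σ ^ 2) (4 * 1 / σ ^ 2) z :=
    ((hasDerivAt_id z).const_mul 4).div_const (σ ^ 2)
  have := hlin.mul hexp
  refine this.congr_deriv (Eq.symm ?_)
  have hkey : z * (1 / (2 * z ^ 2 * τ)) = 1 / (2 * z * τ) := by
    field_simp
  rw [mul_add, mul_one, ← hkey]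
  ring

/-- `w(y,τ) = (4y/σ²)·exp(−1/(2yτ))` is a classical solution of
`w_τ = 2y³·w_yy` at every point `(y,τ)` with `y > 0`, `τ > 0`. -/
theorem wHLW_solves_degenerate_equation (σ : ℝ) (hσ : 0 < σ) (y τ : ℝ)
    (hy : 0 < y) (hτ : 0 < τ) :
    ∃ py pyy pτ : ℝ,
      HasDerivAt (fun y' => wHLW σ y' τ) py y ∧
      HasDerivAt (deriv fun y' => wHLW σ y' τ) pyy y ∧
      HasDerivAt (fun τ' => wHLW σ y τ') pτ τ ∧
      pτ = 2 * y ^ 3 * pyy := by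
  have hτ0 : τ ≠ 0 := hτ.ne'
  have hy0 : y ≠ 0 := hy.ne'
  have hσ0 : σ ≠ 0 := hσ.ne'
  set E : ℝ := Real.exp (-(1 / (2 * y * τ))) with hE
  refine ⟨4 / σ ^ 2 * E * (1 + 1 / (2 * y * τ)),
    4 / σ ^ 2 * E * (1 / (4 * y ^ 3 * τ ^ 2)),
    4 * y / σ ^ 2 * (E * (1 / (2 * y * τ ^ 2))), ?_, ?_, ?_, ?_⟩
  · exact first_deriv σ τ hτ0 y hy
  · -- second derivative
    have heq : (deriv fun y' => wHLW σ y' τ) =ᶠ[nhds y]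
        (fun z => 4 / σ ^ 2 * Real.exp (-(1 / (2 * z * τ))) * (1 + 1 / (2 * z * τ))) := by
      filter_upwards [Ioi_mem_nhds hy] with z hz
      exact (first_deriv σ τ hτ0 z hz).deriv
    have h1 := inner_hasDerivAt τ hτ0 y hy0
    have hexp := h1.exp
    have hconst := hexp.const_mul (4 / σ ^ 2)
    have hh : HasDerivAt (fun z : ℝ => 1 + 1 / (2 * z * τ)) (-(1 / (2 * y ^ 2 * τ))) y := by
      have := (h1.neg).const_add 1
      simpa using this
    have hD := hconst.mul hh
    have hD' : HasDerivAt
        (fun z => 4 / σ ^ 2 * Real.exp (-(1 / (2 * z * τ))) * (1 + 1 / (2 * z * τ)))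
        (4 / σ ^ 2 * E * (1 / (4 * y ^ 3 * τ ^ 2))) y := by
      refine hD.congr_deriv (Eq.symm ?_)
      rw [hE]
      field_simp
      ring
    exact hD'.congr_of_eventuallyEq heq
  · -- τ derivative
    have h1 : HasDerivAt (fun τ' : ℝ => -(1 / (2 * y * τ'))) (1 / (2 * y * τ ^ 2)) τ := by
      have h : HasDerivAt (fun τ' : ℝ => -(2 * y)⁻¹ * τ'⁻¹)
          (-(2 * y)⁻¹ * -(τ ^ 2)⁻¹) τ := (hasDerivAt_inv hτ0).const_mul _
      have hfun : (fun τ' : ℝ => -(2 * y)⁻¹ * τ'⁻¹) = fun τ' : ℝ => -(1 / (2 * y * τ')) := by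
        funext τ'
        simp [mul_inv, div_eq_mul_inv]
        ring
      rw [hfun] at h
      convert h using 1
      field_simp
    have := h1.exp.const_mul (4 * y / σ ^ 2)
    simpa [wHLW, hE, mul_comm, mul_assoc, mul_left_comm] using this
  · field_simp
    ring
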